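/- Let m ≥ 1 and let σ_j : ℤⁿ → ℂ for j = 1,...,m. Suppose the product symbol L(τ,ξ) = ∏_{j=1}^m (τ - σ_j(ξ)) satisfies: there exist C, M, R > 0 with |L(τ,ξ)| ≥ C|(τ,ξ)|^{-M} for all |τ|+|ξ| ≥ R. Suppose additionally each |σ_j(ξ)| ≤ K(1 + |ξ|)^ν for some K, ν > 0. Then each factor sequence {σ_j(ξ)} satisfies the generalized Siegel condition: there exist C', M', R' > 0 with |τ - σ_j(ξ)| ≥ C'|(τ,ξ)|^{-M'} for all |τ|+|ξ| ≥ R'. -/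

import Mathlib

open scoped BigOperators

/-- Euclidean norm of `ξ ∈ ℤⁿ`. -/
noncomputable def znorm {n : ℕ} (ξ : Fin n → ℤ) : ℝ :=
  Real.sqrt (∑ i, ((ξ i : ℝ)) ^ 2)

/-- Euclidean norm of `(τ, ξ) ∈ ℤ × ℤⁿ`. -/
noncomputable def pairNorm {n : ℕ} (τ : ℤ) (ξ : Fin n → ℤ) : ℝ :=
  Real.sqrt ((τ : ℝ) ^ 2 + ∑ i, ((ξ i : ℝ)) ^ 2)

/-! A lower bound `|L| ≥ C P^{-M}` on the product, together with the upper bound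
`|τ - σₖ(ξ)| ≤ B P^{max 1 ν}` on every factor (here `P = |(τ, ξ)|`), leaves for any single factor
the lower bound `C P^{-M} / (B P^{max 1 ν})^{m-1}`, which is again of the form `C' P^{-M'}`. -/

open Finset Real

lemma div_pow_card_sub_one_le_of_le_prod {ι : Type*} [Fintype ι] {f : ι → ℝ}
    (hf : ∀ i, 0 ≤ f i) {a b : ℝ} (hb : 0 < b) (hfb : ∀ i, f i ≤ b) (ha : a ≤ ∏ i, f i)
    (j : ι) : a / b ^ (Fintype.card ι - 1) ≤ f j := by
  classical
  have hrest : ∏ i ∈ univ.erase j, f i ≤ b ^ (Fintype.card ι - 1) :=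
    calc ∏ i ∈ univ.erase j, f i ≤ ∏ _i ∈ univ.erase j, b :=
          prod_le_prod (fun i _ => hf i) (fun i _ => hfb i)
      _ = b ^ (Fintype.card ι - 1) := by
          rw [prod_const, card_erase_of_mem (mem_univ j), card_univ]
  rw [div_le_iff₀ (by positivity)]
  calc a ≤ ∏ i, f i := ha
    _ = f j * ∏ i ∈ univ.erase j, f i := (mul_prod_erase _ _ (mem_univ j)).symm
    _ ≤ f j * b ^ (Fintype.card ι - 1) := mul_le_mul_of_nonneg_left hrest (hf j)

lemma mul_rpow_neg_div_mul_rpow_pow {P : ℝ} (hP : 0 < P) (C M B ν : ℝ) (k : ℕ) :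
    C * P ^ (-M) / (B * P ^ ν) ^ k = C / B ^ k * P ^ (-(M + ν * k)) := by
  rw [mul_pow, ← rpow_natCast (P ^ ν), ← rpow_mul hP.le, neg_add, rpow_add hP,
    rpow_neg hP.le (ν * k)]
  ring

lemma add_mul_one_add_rpow_le {P K ν : ℝ} (hP : 1 ≤ P) (hK : 0 ≤ K) (hν : 0 ≤ ν) :
    P + K * (1 + P) ^ ν ≤ (1 + K * 2 ^ ν) * P ^ max 1 ν := by
  have hP_le : P ≤ P ^ max 1 ν := by
    simpa using rpow_le_rpow_of_exponent_le hP (le_max_left 1 ν)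
  have hgrowth : (1 + P) ^ ν ≤ 2 ^ ν * P ^ max 1 ν :=
    calc (1 + P) ^ ν ≤ (2 * P) ^ ν := by gcongr; linarith
      _ = 2 ^ ν * P ^ ν := mul_rpow zero_le_two (by linarith)
      _ ≤ 2 ^ ν * P ^ max 1 ν := by
          gcongr
          exact le_max_right 1 ν
  nlinarith

section pairNorm

variable {n : ℕ} (τ : ℤ) (ξ : Fin n → ℤ)

lemma abs_le_pairNorm : |(τ : ℝ)| ≤ pairNorm τ ξ := by
  rw [pairNorm, ← sqrt_sq_eq_abs]
  exact sqrt_le_sqrt (le_add_of_nonneg_right (by positivity))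

lemma znorm_le_pairNorm : znorm ξ ≤ pairNorm τ ξ :=
  sqrt_le_sqrt (le_add_of_nonneg_left (sq_nonneg _))

lemma one_le_pairNorm {τ : ℤ} {ξ : Fin n → ℤ} (h : 2 ≤ |(τ : ℝ)| + znorm ξ) :
    1 ≤ pairNorm τ ξ := by
  linarith [abs_le_pairNorm τ ξ, znorm_le_pairNorm τ ξ]

lemma norm_sub_le_pairNorm_rpow {τ : ℤ} {ξ : Fin n → ℤ} {s : ℂ} {K ν : ℝ} (hK : 0 ≤ K)
    (hν : 0 ≤ ν) (hs : ‖s‖ ≤ K * (1 + znorm ξ) ^ ν) (h : 2 ≤ |(τ : ℝ)| + znorm ξ) :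
    ‖(τ : ℂ) - s‖ ≤ (1 + K * 2 ^ ν) * pairNorm τ ξ ^ max 1 ν := by
  have hz : (1 + znorm ξ) ^ ν ≤ (1 + pairNorm τ ξ) ^ ν := by
    gcongr
    · exact add_nonneg zero_le_one (sqrt_nonneg _)
    · exact znorm_le_pairNorm τ ξ
  calc ‖(τ : ℂ) - s‖ ≤ ‖(τ : ℂ)‖ + ‖s‖ := norm_sub_le _ _
    _ ≤ pairNorm τ ξ + K * (1 + pairNorm τ ξ) ^ ν := by
        rw [Complex.norm_intCast]
        gcongr
        · exact abs_le_pairNorm τ ξ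
        · exact hs.trans (by gcongr)
    _ ≤ (1 + K * 2 ^ ν) * pairNorm τ ξ ^ max 1 ν :=
        add_mul_one_add_rpow_le (one_le_pairNorm h) hK hν

end pairNorm

theorem factors_generalized_siegel_general {n : ℕ} {m : ℕ}
    (σ : Fin m → (Fin n → ℤ) → ℂ) (C M R K ν : ℝ)
    (hC : 0 < C) (hM : 0 < M) (hK : 0 < K) (hν : 0 < ν)
    (hσ : ∀ (j : Fin m) (ξ : Fin n → ℤ),
      ‖σ j ξ‖ ≤ K * (1 + znorm ξ) ^ ν)
    (hL : ∀ (τ : ℤ) (ξ : Fin n → ℤ), R ≤ |(τ : ℝ)| + znorm ξ →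
      C * pairNorm τ ξ ^ (-M) ≤ ∏ j, ‖(τ : ℂ) - σ j ξ‖) :
    ∀ j : Fin m, ∃ C' M' R' : ℝ, 0 < C' ∧ 0 < M' ∧ 0 < R' ∧
      ∀ (τ : ℤ) (ξ : Fin n → ℤ), R' ≤ |(τ : ℝ)| + znorm ξ →
        C' * pairNorm τ ξ ^ (-M') ≤ ‖(τ : ℂ) - σ j ξ‖ := by
  intro j
  refine ⟨C / (1 + K * 2 ^ ν) ^ (m - 1), M + max 1 ν * (m - 1 : ℕ), max R 2,
    by positivity, by positivity, by positivity, fun τ ξ hτξ => ?_⟩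
  have h2 : 2 ≤ |(τ : ℝ)| + znorm ξ := (le_max_right R 2).trans hτξ
  have hP : 1 ≤ pairNorm τ ξ := one_le_pairNorm h2
  have hfactor := div_pow_card_sub_one_le_of_le_prod (fun _ => norm_nonneg _) (by positivity)
    (fun k => norm_sub_le_pairNorm_rpow hK.le hν.le (hσ k ξ) h2)
    (hL τ ξ ((le_max_left R 2).trans hτξ)) j
  rwa [Fintype.card_fin, mul_rpow_neg_div_mul_rpow_pow (by linarith)] at hfactor

/-- If the product symbol `L(τ,ξ) = ∏ⱼ (τ - σⱼ(ξ))` satisfies the Greenfield–Wallach lower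
bound and each `σⱼ` has polynomial growth `|σⱼ(ξ)| ≤ K(1 + |ξ|)^ν`, then each factor
sequence `{σⱼ(ξ)}` satisfies the generalized Siegel condition. -/
theorem factors_generalized_siegel {n : ℕ} {m : ℕ} (hm : 1 ≤ m)
    (σ : Fin m → (Fin n → ℤ) → ℂ) (C M R K ν : ℝ)
    (hC : 0 < C) (hM : 0 < M) (hR : 0 < R) (hK : 0 < K) (hν : 0 < ν)
    (hσ : ∀ (j : Fin m) (ξ : Fin n → ℤ),
      ‖σ j ξ‖ ≤ K * (1 + znorm ξ) ^ ν)
    (hL : ∀ (τ : ℤ) (ξ : Fin n → ℤ), R ≤ |(τ : ℝ)| + znorm ξ →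
      C * pairNorm τ ξ ^ (-M) ≤ ∏ j, ‖(τ : ℂ) - σ j ξ‖) :
    ∀ j : Fin m, ∃ C' M' R' : ℝ, 0 < C' ∧ 0 < M' ∧ 0 < R' ∧
      ∀ (τ : ℤ) (ξ : Fin n → ℤ), R' ≤ |(τ : ℝ)| + znorm ξ →
        C' * pairNorm τ ξ ^ (-M') ≤ ‖(τ : ℂ) - σ j ξ‖ :=
  factors_generalized_siegel_general σ C M R K ν hC hM hK hν hσ hL
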